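/- arXiv:2508.11720 — 5 statements merged into one kernel-verified Lean document; each statement's English description precedes it below -/
import Mathlib

section
/- For any commutative ring R, elements x, y, α ∈ R, and natural number k, the degenerate falling factorial satisfies the Vandermonde-type convolution (x+y)_{k,α} = Σ_{j=0}^{k} C(k,j) · (x)_{j,α} · (y)_{k-j,α}. -/
open Finset

/-- The degenerate falling factorial `(x)_{n,α} = ∏_{i=0}^{n-1} (x - i·α)`. -/
def degFall {R : Type*} [CommRing R] (α x : R) (n : ℕ) : R :=
  ∏ i ∈ Finset.range n, (x - (i : R) * α)

/-- The ordinary falling factorial `(x)_n = x(x-1)⋯(x-n+1)`. -/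
def fall {R : Type*} [CommRing R] (x : R) (n : ℕ) : R :=
  ∏ i ∈ Finset.range n, (x - (i : R))

/-- Signed Stirling numbers of the first kind, via the standard recurrence. -/
def stirling1 : ℕ → ℕ → ℤ
  | 0, 0 => 1
  | 0, _ + 1 => 0
  | n + 1, 0 => -(n : ℤ) * stirling1 n 0
  | n + 1, k + 1 => stirling1 n k - (n : ℤ) * stirling1 n (k + 1)

/-- The Simsek numbers `y₁(n,k;λ) = (1/k!) Σ_{j=0}^{k} C(k,j) jⁿ λʲ`. -/
noncomputable def simsek {F : Type*} [Field F] (lam : F) (n k : ℕ) : F :=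
  (k.factorial : F)⁻¹ * ∑ j ∈ Finset.range (k + 1),
    (k.choose j : F) * (j : F) ^ n * lam ^ j

/-- The new type degenerate Simsek numbers
`y*₁,α(n,k;λ) = (1/k!) Σ_{ℓ=0}^{k} Σ_{j=0}^{ℓ} C(ℓ,j) α^{k-ℓ} s(k,ℓ) λʲ jⁿ`. -/
noncomputable def ystar {F : Type*} [Field F] (α lam : F) (n k : ℕ) : F :=
  (k.factorial : F)⁻¹ * ∑ ℓ ∈ Finset.range (k + 1), ∑ j ∈ Finset.range (ℓ + 1),
    (ℓ.choose j : F) * α ^ (k - ℓ) * ((stirling1 k ℓ : ℤ) : F) * lam ^ j * (j : F) ^ n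

lemma degFall_succ {R : Type*} [CommRing R] (α x : R) (n : ℕ) :
    degFall α x (n + 1) = degFall α x n * (x - (n : R) * α) :=
  Finset.prod_range_succ _ _

/-- degenerate Vandermonde convolution
`(x+y)_{k,α} = Σ_{j=0}^{k} C(k,j) (x)_{j,α} (y)_{k-j,α}`. -/
theorem degFall_add (R : Type*) [CommRing R] (α x y : R) (k : ℕ) :
    degFall α (x + y) k =
      ∑ j ∈ Finset.range (k + 1),
        (k.choose j : R) * degFall α x j * degFall α y (k - j) := by
  induction k with
  | zero => simp [degFall]
  | succ k ih =>
    rw [degFall_succ, ih, Finset.sum_mul]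
    have key : ∀ j ∈ Finset.range (k + 1),
        (k.choose j : R) * degFall α x j * degFall α y (k - j) * (x + y - (k : R) * α)
        = (k.choose j : R) * degFall α x (j + 1) * degFall α y (k - j)
          + (k.choose j : R) * degFall α x j * degFall α y (k - j + 1) := by
      intro j hj
      rw [Finset.mem_range, Nat.lt_succ_iff] at hj
      rw [degFall_succ, degFall_succ]
      have hc : ((k - j : ℕ) : R) = (k : R) - (j : R) := Nat.cast_sub hj
      rw [hc]; ring
    rw [Finset.sum_congr rfl key, Finset.sum_add_distrib]
    -- RHS: peel off the j = 0 term after reindexing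
    rw [Finset.sum_range_succ' (fun j => ((k+1).choose j : R) * degFall α x j *
          degFall α y (k + 1 - j)) (k + 1)]
    have h0 : (((k+1).choose 0 : ℕ) : R) * degFall α x 0 * degFall α y (k + 1 - 0)
        = degFall α y (k + 1) := by simp [degFall]
    rw [h0]
    have hsplit : ∀ i ∈ Finset.range (k + 1),
        (((k+1).choose (i+1) : ℕ) : R) * degFall α x (i+1) * degFall α y (k + 1 - (i+1))
        = (k.choose i : R) * degFall α x (i+1) * degFall α y (k - i)
          + (k.choose (i+1) : R) * degFall α x (i+1) * degFall α y (k - i) := by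
      intro i hi
      have : (k+1).choose (i+1) = k.choose i + k.choose (i+1) := Nat.choose_succ_succ k i
      rw [this]
      push_cast
      ring
    rw [Finset.sum_congr rfl hsplit, Finset.sum_add_distrib]
    -- now match the second sums
    have hsecond : ∑ j ∈ Finset.range (k + 1),
        (k.choose j : R) * degFall α x j * degFall α y (k - j + 1)
        = (∑ i ∈ Finset.range (k + 1),
            (k.choose (i+1) : R) * degFall α x (i+1) * degFall α y (k - i))
          + degFall α y (k + 1) := by
      rw [Finset.sum_range_succ' (fun j => (k.choose j : R) * degFall α x j *
            degFall α y (k - j + 1)) k]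
      rw [Finset.sum_range_succ (fun i => (k.choose (i+1) : R) * degFall α x (i+1) *
            degFall α y (k - i))]
      simp only [Nat.choose_succ_self, Nat.cast_zero, zero_mul, add_zero]
      congr 1
      · apply Finset.sum_congr rfl
        intro i hi
        rw [Finset.mem_range] at hi
        have : k - (i + 1) + 1 = k - i := by omega
        rw [this]
      · simp [degFall]
    rw [hsecond]
    ring
end

section
/- The new type degenerate Simsek numbers satisfy the recurrence in k: for all n ≥ 0 and k ≥ 0, y*_{1,α}(n,k+1;λ) = (1/(k+1)) · ( λ Σ_{ℓ=0}^{n} C(n,ℓ) y*_{1,α}(ℓ,k;λ) + (1 - kα) y*_{1,α}(n,k;λ) ). -/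
open Finset

lemma stirling1_eq_zero {k l : ℕ} (h : k < l) : stirling1 k l = 0 := by
  induction k generalizing l with
  | zero =>
    cases l with
    | zero => omega
    | succ l => rfl
  | succ k ih =>
    cases l with
    | zero => omega
    | succ l =>
      show stirling1 k l - (k : ℤ) * stirling1 k (l + 1) = 0
      rw [ih (by omega), ih (by omega)]
      ring

noncomputable def Afn {F : Type*} [Field F] (α : F) (k j : ℕ) : F :=
  ∑ ℓ ∈ Finset.range (k + 1), (ℓ.choose j : F) * α ^ (k - ℓ) * ((stirling1 k ℓ : ℤ) : F)

lemma Afn_zero_of_lt {F : Type*} [Field F] (α : F) {k j : ℕ} (h : k < j) :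
    Afn α k j = 0 := by
  apply Finset.sum_eq_zero
  intro ℓ hℓ
  rw [Nat.choose_eq_zero_of_lt (by simp at hℓ; omega)]
  simp

lemma Afn_succ_zero {F : Type*} [Field F] (α : F) (k : ℕ) :
    Afn α (k + 1) 0 = (1 - (k : F) * α) * Afn α k 0 := by
  unfold Afn
  rw [Finset.sum_range_succ']
  have hs : ∀ ℓ, stirling1 (k + 1) (ℓ + 1) = stirling1 k ℓ - (k : ℤ) * stirling1 k (ℓ + 1) :=
    fun ℓ => rfl
  have hs0 : stirling1 (k + 1) 0 = -(k : ℤ) * stirling1 k 0 := rfl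
  simp only [hs, hs0, Nat.choose_zero_right, Nat.cast_one, one_mul]
  push_cast
  rw [Finset.sum_congr rfl (fun ℓ _ => by ring :
      ∀ ℓ ∈ Finset.range (k + 1),
      α ^ (k - ℓ) * (((stirling1 k ℓ : ℤ) : F) - (k : F) * ((stirling1 k (ℓ+1) : ℤ) : F))
      = α ^ (k - ℓ) * ((stirling1 k ℓ : ℤ) : F)
        - (k : F) * (α ^ (k - ℓ) * ((stirling1 k (ℓ+1) : ℤ) : F))), Finset.sum_sub_distrib, ← Finset.mul_sum]
  have h2 : (∑ ℓ ∈ Finset.range (k + 1), α ^ (k - ℓ) * ((stirling1 k (ℓ+1) : ℤ) : F))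
      + α ^ (k + 1) * ((stirling1 k 0 : ℤ) : F)
      = α * ∑ ℓ ∈ Finset.range (k + 1), α ^ (k - ℓ) * ((stirling1 k ℓ : ℤ) : F) := by
    have h3 : ∀ ℓ ∈ Finset.range (k + 1),
        α ^ (k + 1 - ℓ) * ((stirling1 k ℓ : ℤ) : F)
        = α * (α ^ (k - ℓ) * ((stirling1 k ℓ : ℤ) : F)) := by
      intro ℓ hℓ
      simp only [Finset.mem_range] at hℓ
      have : k + 1 - ℓ = (k - ℓ) + 1 := by omega
      rw [this, pow_succ]; ring
    calc (∑ ℓ ∈ Finset.range (k + 1), α ^ (k - ℓ) * ((stirling1 k (ℓ+1) : ℤ) : F))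
        + α ^ (k + 1) * ((stirling1 k 0 : ℤ) : F)
        = ∑ ℓ ∈ Finset.range (k + 2), α ^ (k + 1 - ℓ) * ((stirling1 k ℓ : ℤ) : F) := by
          rw [Finset.sum_range_succ' (fun ℓ => α ^ (k + 1 - ℓ) * ((stirling1 k ℓ : ℤ) : F)) (k+1)]
          simp [Nat.succ_sub_succ]
      _ = ∑ ℓ ∈ Finset.range (k + 1), α ^ (k + 1 - ℓ) * ((stirling1 k ℓ : ℤ) : F) := by
          rw [Finset.sum_range_succ, stirling1_eq_zero (by omega)]
          simp
      _ = α * ∑ ℓ ∈ Finset.range (k + 1), α ^ (k - ℓ) * ((stirling1 k ℓ : ℤ) : F) := by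
          rw [Finset.mul_sum]
          exact Finset.sum_congr rfl h3
  linear_combination (-(k:F)) * h2

lemma Afn_succ_succ {F : Type*} [Field F] (α : F) (k j : ℕ) :
    Afn α (k + 1) (j + 1) = Afn α k j + (1 - (k : F) * α) * Afn α k (j + 1) := by
  unfold Afn
  rw [Finset.sum_range_succ']
  have hs : ∀ ℓ, stirling1 (k + 1) (ℓ + 1) = stirling1 k ℓ - (k : ℤ) * stirling1 k (ℓ + 1) :=
    fun _ => rfl
  simp only [hs, Nat.choose_zero_succ, Nat.cast_zero, zero_mul, add_zero]
  push_cast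
  have h2 : ∑ ℓ ∈ Finset.range (k + 1),
        (((ℓ+1).choose (j+1) : ℕ) : F) * α ^ (k - ℓ) * ((stirling1 k (ℓ+1) : ℤ) : F)
      = α * ∑ ℓ ∈ Finset.range (k + 1),
        ((ℓ.choose (j+1) : ℕ) : F) * α ^ (k - ℓ) * ((stirling1 k ℓ : ℤ) : F) := by
    calc ∑ ℓ ∈ Finset.range (k + 1),
        (((ℓ+1).choose (j+1) : ℕ) : F) * α ^ (k - ℓ) * ((stirling1 k (ℓ+1) : ℤ) : F)
        = ∑ ℓ ∈ Finset.range (k + 2),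
            ((ℓ.choose (j+1) : ℕ) : F) * α ^ (k + 1 - ℓ) * ((stirling1 k ℓ : ℤ) : F) := by
          rw [Finset.sum_range_succ'
            (fun ℓ => ((ℓ.choose (j+1) : ℕ) : F) * α ^ (k + 1 - ℓ) * ((stirling1 k ℓ : ℤ) : F))
            (k+1)]
          simp [Nat.succ_sub_succ, Nat.choose_zero_succ]
      _ = ∑ ℓ ∈ Finset.range (k + 1),
            ((ℓ.choose (j+1) : ℕ) : F) * α ^ (k + 1 - ℓ) * ((stirling1 k ℓ : ℤ) : F) := by
          rw [Finset.sum_range_succ, stirling1_eq_zero (by omega)]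
          simp
      _ = α * ∑ ℓ ∈ Finset.range (k + 1),
            ((ℓ.choose (j+1) : ℕ) : F) * α ^ (k - ℓ) * ((stirling1 k ℓ : ℤ) : F) := by
          rw [Finset.mul_sum]
          apply Finset.sum_congr rfl
          intro ℓ hℓ
          simp only [Finset.mem_range] at hℓ
          have : k + 1 - ℓ = (k - ℓ) + 1 := by omega
          rw [this, pow_succ]; ring
  have expand : ∀ ℓ ∈ Finset.range (k + 1),
      (((ℓ+1).choose (j+1) : ℕ) : F) * α ^ (k - ℓ)
        * (((stirling1 k ℓ : ℤ) : F) - (k : F) * ((stirling1 k (ℓ+1) : ℤ) : F))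
      = ((ℓ.choose j : ℕ) : F) * α ^ (k - ℓ) * ((stirling1 k ℓ : ℤ) : F)
        + ((ℓ.choose (j+1) : ℕ) : F) * α ^ (k - ℓ) * ((stirling1 k ℓ : ℤ) : F)
        - (k : F) * ((((ℓ+1).choose (j+1) : ℕ) : F) * α ^ (k - ℓ) * ((stirling1 k (ℓ+1) : ℤ) : F)) := by
    intro ℓ _
    have hc : (ℓ+1).choose (j+1) = ℓ.choose j + ℓ.choose (j+1) := Nat.choose_succ_succ ℓ j
    rw [hc]
    push_cast
    ring
  rw [Finset.sum_congr rfl expand, Finset.sum_sub_distrib, Finset.sum_add_distrib,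
    ← Finset.mul_sum]
  linear_combination (-(k : F)) * h2

lemma ystar_eq {F : Type*} [Field F] (α lam : F) (n k : ℕ) :
    ystar α lam n k = (k.factorial : F)⁻¹ *
      ∑ j ∈ Finset.range (k + 1), lam ^ j * (j : F) ^ n * Afn α k j := by
  unfold ystar
  congr 1
  rw [show (∑ ℓ ∈ Finset.range (k + 1), ∑ j ∈ Finset.range (ℓ + 1),
      (ℓ.choose j : F) * α ^ (k - ℓ) * ((stirling1 k ℓ : ℤ) : F) * lam ^ j * (j : F) ^ n)
    = ∑ ℓ ∈ Finset.range (k + 1), ∑ j ∈ Finset.range (k + 1),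
      (ℓ.choose j : F) * α ^ (k - ℓ) * ((stirling1 k ℓ : ℤ) : F) * lam ^ j * (j : F) ^ n from
    Finset.sum_congr rfl fun ℓ hℓ => Finset.sum_subset
      (by simp only [Finset.mem_range] at hℓ ⊢; intro x hx; simp only [Finset.mem_range] at hx ⊢; omega)
      (fun x _ hx => by
        simp only [Finset.mem_range, not_lt] at hx
        rw [Nat.choose_eq_zero_of_lt (by omega)]
        simp)]
  rw [Finset.sum_comm]
  apply Finset.sum_congr rfl
  intro j _
  unfold Afn
  rw [Finset.mul_sum]
  apply Finset.sum_congr rfl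
  intro ℓ _
  ring

lemma binom_sum {F : Type*} [Field F] (n j : ℕ) :
    ∑ ℓ ∈ Finset.range (n + 1), (n.choose ℓ : F) * (j : F) ^ ℓ = ((j : F) + 1) ^ n := by
  rw [add_pow]
  apply Finset.sum_congr rfl
  intro ℓ _
  simp [mul_comm]

lemma key_sum {F : Type*} [Field F] (α lam : F) (n k : ℕ) :
    ∑ j ∈ Finset.range (k + 2), lam ^ j * (j : F) ^ n * Afn α (k + 1) j
      = lam * (∑ j ∈ Finset.range (k + 1), lam ^ j * ((j : F) + 1) ^ n * Afn α k j)
        + (1 - (k : F) * α) * ∑ j ∈ Finset.range (k + 1), lam ^ j * (j : F) ^ n * Afn α k j := by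
  rw [Finset.sum_range_succ']
  simp only [Afn_succ_succ, Afn_succ_zero]
  have htop : Afn α k (k + 1) = 0 := Afn_zero_of_lt α (by omega)
  have hshift : (∑ j ∈ Finset.range (k + 1),
        lam ^ (j + 1) * (((j + 1 : ℕ)) : F) ^ n * Afn α k (j + 1))
      + lam ^ 0 * ((0 : ℕ) : F) ^ n * Afn α k 0
      = ∑ j ∈ Finset.range (k + 1), lam ^ j * (j : F) ^ n * Afn α k j := by
    rw [← Finset.sum_range_succ' (fun j => lam ^ j * (j : F) ^ n * Afn α k j) (k + 1),
        Finset.sum_range_succ, htop]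
    simp
  have hsplit : ∀ j ∈ Finset.range (k + 1),
      lam ^ (j + 1) * (((j + 1 : ℕ)) : F) ^ n
        * (Afn α k j + (1 - (k : F) * α) * Afn α k (j + 1))
      = lam * (lam ^ j * ((j : F) + 1) ^ n * Afn α k j)
        + (1 - (k : F) * α) * (lam ^ (j + 1) * (((j + 1 : ℕ)) : F) ^ n * Afn α k (j + 1)) := by
    intro j _
    push_cast
    ring
  rw [Finset.sum_congr rfl hsplit, Finset.sum_add_distrib, ← Finset.mul_sum, ← Finset.mul_sum]
  linear_combination (1 - (k : F) * α) * hshift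


/-- recurrence in `k` for the new type degenerate Simsek numbers. -/
theorem ystar_recurrence_k (F : Type*) [Field F] [CharZero F]
    (α lam : F) (n k : ℕ) :
    ystar α lam n (k + 1) =
      ((k : F) + 1)⁻¹ *
        (lam * ∑ ℓ ∈ Finset.range (n + 1), (n.choose ℓ : F) * ystar α lam ℓ k +
          (1 - (k : F) * α) * ystar α lam n k) := by

  have hsum : ∑ ℓ ∈ Finset.range (n + 1), (n.choose ℓ : F) * ystar α lam ℓ k
      = (k.factorial : F)⁻¹ * ∑ j ∈ Finset.range (k + 1),
          lam ^ j * ((j : F) + 1) ^ n * Afn α k j := by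
    simp only [ystar_eq, Finset.mul_sum]
    rw [Finset.sum_comm]
    apply Finset.sum_congr rfl
    intro j _
    rw [← binom_sum n j]
    simp only [Finset.mul_sum, Finset.sum_mul]
    apply Finset.sum_congr rfl
    intro ℓ _
    ring
  rw [ystar_eq, ystar_eq, hsum, key_sum]
  have hfac : ((k + 1).factorial : F) = ((k : F) + 1) * (k.factorial : F) := by
    rw [Nat.factorial_succ]
    push_cast
    ring
  rw [hfac, mul_inv]
  ring
end

section
/- The new type degenerate Simsek numbers satisfy the recurrence in n: for all n ≥ 0 and k ≥ 1, y*_{1,α}(n+1,k;λ) = (λ/k) Σ_{j=0}^{n} C(n,j) ( y*_{1,α}(j,k-1;λ) + y*_{1,α}(j+1,k-1;λ) ) + ((1+α-kα)/k) · y*_{1,α}(n+1,k-1;λ), together with y*_{1,α}(n,0;λ) = δ_{n,0}. -/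
open Finset

lemma stirling1_eq_zero_s7 : ∀ {n k : ℕ}, n < k → stirling1 n k = 0 := by
  intro n
  induction n with
  | zero =>
    intro k h
    match k with
    | k + 1 => rfl
  | succ n ih =>
    intro k h
    match k with
    | k + 1 =>
      rw [stirling1, ih (by omega), ih (by omega)]
      ring

section Aux

variable {F : Type*} [Field F] (α lam : F)

/-- Auxiliary sum `S(n,ℓ) = Σ_{j=0}^{ℓ} C(ℓ,j) λʲ jⁿ`. -/
noncomputable def Sfun (lam : F) (n ℓ : ℕ) : F :=
  ∑ j ∈ Finset.range (ℓ + 1), (ℓ.choose j : F) * lam ^ j * (j : F) ^ n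

lemma Sfun_succ (n ℓ : ℕ) :
    Sfun lam n (ℓ + 1) =
      Sfun lam n ℓ + lam * ∑ p ∈ Finset.range (n + 1), (n.choose p : F) * Sfun lam p ℓ := by
  have h1 : Sfun lam n (ℓ + 1)
      = ∑ j ∈ Finset.range (ℓ + 1),
          (((ℓ.choose j : F) + (ℓ.choose (j+1) : F)) * lam ^ (j+1) * ((j:F)+1) ^ n)
        + (ℓ.choose 0 : F) * lam ^ 0 * (0:F) ^ n := by
    rw [Sfun, Finset.sum_range_succ']
    simp [Nat.choose_succ_succ]
  have h2 : ∑ j ∈ Finset.range (ℓ + 1), ((ℓ.choose (j+1) : F) * lam ^ (j+1) * ((j:F)+1) ^ n)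
        + (ℓ.choose 0 : F) * lam ^ 0 * (0:F) ^ n = Sfun lam n ℓ := by
    have h := (Finset.sum_range_succ' (fun j => (ℓ.choose j : F) * lam ^ j * ((j:F)) ^ n) (ℓ+1)).symm
    push_cast at h ⊢
    rw [h, Finset.sum_range_succ, Nat.choose_succ_self, Sfun]
    push_cast
    ring
  have h3 : ∑ j ∈ Finset.range (ℓ + 1), ((ℓ.choose j : F) * lam ^ (j+1) * ((j:F)+1) ^ n)
      = lam * ∑ p ∈ Finset.range (n + 1), (n.choose p : F) * Sfun lam p ℓ := by
    have key : ∀ j ∈ Finset.range (ℓ + 1),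
        (ℓ.choose j : F) * lam ^ (j+1) * ((j:F)+1) ^ n
          = ∑ p ∈ Finset.range (n + 1),
              lam * ((n.choose p : F) * ((ℓ.choose j : F) * lam ^ j * (j:F) ^ p)) := by
      intro j _
      rw [add_pow, Finset.mul_sum]
      refine Finset.sum_congr rfl fun p _ => ?_
      rw [pow_succ]
      ring
    rw [Finset.sum_congr rfl key, Finset.sum_comm, Finset.mul_sum]
    refine Finset.sum_congr rfl fun p _ => ?_
    rw [Sfun, Finset.mul_sum, Finset.mul_sum]
  have h4 : ∑ j ∈ Finset.range (ℓ + 1),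
        (((ℓ.choose j : F) + (ℓ.choose (j+1) : F)) * lam ^ (j+1) * ((j:F)+1) ^ n)
      = (∑ j ∈ Finset.range (ℓ + 1), ((ℓ.choose j : F) * lam ^ (j+1) * ((j:F)+1) ^ n))
        + ∑ j ∈ Finset.range (ℓ + 1), ((ℓ.choose (j+1) : F) * lam ^ (j+1) * ((j:F)+1) ^ n) := by
    rw [← Finset.sum_add_distrib]
    exact Finset.sum_congr rfl fun j _ => by ring
  rw [h1, h4]
  linear_combination h2 + h3

/-- `T(n,k) = Σ_ℓ α^{k-ℓ} s(k,ℓ) S(n,ℓ) = k! · y*(n,k)`. -/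
noncomputable def Tfun (α lam : F) (n k : ℕ) : F :=
  ∑ ℓ ∈ Finset.range (k + 1), α ^ (k - ℓ) * ((stirling1 k ℓ : ℤ) : F) * Sfun lam n ℓ

lemma ystar_eq_Tfun (n k : ℕ) :
    ystar α lam n k = (k.factorial : F)⁻¹ * Tfun α lam n k := by
  rw [ystar, Tfun]
  congr 1
  refine Finset.sum_congr rfl fun ℓ _ => ?_
  rw [Sfun, Finset.mul_sum]
  refine Finset.sum_congr rfl fun j _ => ?_
  ring

lemma Tfun_succ (n m : ℕ) :
    Tfun α lam n (m + 1) =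
      (1 - (m : F) * α) * Tfun α lam n m
        + lam * ∑ p ∈ Finset.range (n + 1), (n.choose p : F) * Tfun α lam p m := by
  have hB : (∑ ℓ ∈ Finset.range (m + 1),
        α ^ (m - ℓ) * ((stirling1 m (ℓ+1) : ℤ) : F) * Sfun lam n (ℓ+1))
      + α ^ (m + 1) * ((stirling1 m 0 : ℤ) : F) * Sfun lam n 0
      = α * Tfun α lam n m := by
    have h := (Finset.sum_range_succ'
      (fun ℓ => α ^ (m + 1 - ℓ) * ((stirling1 m ℓ : ℤ) : F) * Sfun lam n ℓ) (m+1)).symm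
    simp only [Nat.succ_sub_succ, Nat.sub_zero] at h
    rw [h, Finset.sum_range_succ, Nat.sub_self,
      stirling1_eq_zero_s7 (Nat.lt_succ_self m)]
    rw [Tfun, Finset.mul_sum]
    simp only [Int.cast_zero, mul_zero, zero_mul, add_zero]
    refine Finset.sum_congr rfl fun ℓ hℓ => ?_
    rw [Finset.mem_range] at hℓ
    rw [show m + 1 - ℓ = (m - ℓ) + 1 from by omega, pow_succ]
    ring
  have h1 : Tfun α lam n (m + 1)
      = (∑ ℓ ∈ Finset.range (m + 1),
          α ^ (m - ℓ) * ((stirling1 m ℓ : ℤ) : F) * Sfun lam n (ℓ+1))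
        - (m : F) * ((∑ ℓ ∈ Finset.range (m + 1),
            α ^ (m - ℓ) * ((stirling1 m (ℓ+1) : ℤ) : F) * Sfun lam n (ℓ+1))
          + α ^ (m + 1) * ((stirling1 m 0 : ℤ) : F) * Sfun lam n 0) := by
    rw [Tfun, Finset.sum_range_succ']
    have e : ∀ ℓ ∈ Finset.range (m + 1),
        α ^ (m + 1 - (ℓ+1)) * ((stirling1 (m+1) (ℓ+1) : ℤ) : F) * Sfun lam n (ℓ+1)
          = α ^ (m - ℓ) * ((stirling1 m ℓ : ℤ) : F) * Sfun lam n (ℓ+1)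
            - (m : F) * (α ^ (m - ℓ) * ((stirling1 m (ℓ+1) : ℤ) : F) * Sfun lam n (ℓ+1)) := by
      intro ℓ _
      rw [Nat.succ_sub_succ, show stirling1 (m+1) (ℓ+1)
          = stirling1 m ℓ - (m : ℤ) * stirling1 m (ℓ+1) from by rw [stirling1]]
      push_cast
      ring
    rw [Finset.sum_congr rfl e, Finset.sum_sub_distrib, ← Finset.mul_sum,
      show stirling1 (m+1) 0 = -(m : ℤ) * stirling1 m 0 from by rw [stirling1]]
    push_cast
    ring
  have h2 : ∑ ℓ ∈ Finset.range (m + 1),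
        α ^ (m - ℓ) * ((stirling1 m ℓ : ℤ) : F) * Sfun lam n (ℓ+1)
      = Tfun α lam n m + lam * ∑ p ∈ Finset.range (n + 1), (n.choose p : F) * Tfun α lam p m := by
    have key : ∀ ℓ ∈ Finset.range (m + 1),
        α ^ (m - ℓ) * ((stirling1 m ℓ : ℤ) : F) * Sfun lam n (ℓ+1)
          = α ^ (m - ℓ) * ((stirling1 m ℓ : ℤ) : F) * Sfun lam n ℓ
            + ∑ p ∈ Finset.range (n + 1),
                lam * ((n.choose p : F) * (α ^ (m - ℓ) * ((stirling1 m ℓ : ℤ) : F) * Sfun lam p ℓ)) := by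
      intro ℓ _
      have hr : ∑ p ∈ Finset.range (n + 1),
            lam * ((n.choose p : F) * (α ^ (m - ℓ) * ((stirling1 m ℓ : ℤ) : F) * Sfun lam p ℓ))
          = α ^ (m - ℓ) * ((stirling1 m ℓ : ℤ) : F)
              * (lam * ∑ p ∈ Finset.range (n + 1), (n.choose p : F) * Sfun lam p ℓ) := by
        rw [Finset.mul_sum, Finset.mul_sum]
        exact Finset.sum_congr rfl fun p _ => by ring
      rw [Sfun_succ, hr]
      ring
    rw [Finset.sum_congr rfl key, Finset.sum_add_distrib]
    have hswap : ∑ ℓ ∈ Finset.range (m + 1), ∑ p ∈ Finset.range (n + 1),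
          lam * ((n.choose p : F) * (α ^ (m - ℓ) * ((stirling1 m ℓ : ℤ) : F) * Sfun lam p ℓ))
        = lam * ∑ p ∈ Finset.range (n + 1), (n.choose p : F) * Tfun α lam p m := by
      rw [Finset.sum_comm, Finset.mul_sum]
      refine Finset.sum_congr rfl fun p _ => ?_
      rw [Tfun, Finset.mul_sum, Finset.mul_sum]
    rw [hswap, Tfun]
  rw [h1, hB, h2]
  ring

lemma ystar_succ [CharZero F] (n m : ℕ) :
    ystar α lam n (m + 1) =
      (lam * ∑ p ∈ Finset.range (n + 1), (n.choose p : F) * ystar α lam p m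
        + (1 - (m : F) * α) * ystar α lam n m) / ((m : F) + 1) := by
  have hm1 : ((m : F) + 1) ≠ 0 := by
    have h : ((m + 1 : ℕ) : F) ≠ 0 := Nat.cast_ne_zero.mpr (Nat.succ_ne_zero m)
    push_cast at h; exact h
  have hf : ((m.factorial : F)) ≠ 0 := Nat.cast_ne_zero.mpr m.factorial_ne_zero
  rw [ystar_eq_Tfun, Tfun_succ]
  have hsum : ∑ p ∈ Finset.range (n + 1), (n.choose p : F) * ystar α lam p m
      = (m.factorial : F)⁻¹ * ∑ p ∈ Finset.range (n + 1), (n.choose p : F) * Tfun α lam p m := by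
    rw [Finset.mul_sum]
    refine Finset.sum_congr rfl fun p _ => ?_
    rw [ystar_eq_Tfun]
    ring
  rw [hsum, ystar_eq_Tfun, Nat.factorial_succ]
  push_cast
  field_simp
  ring

end Aux

lemma binom_shift {F : Type*} [Field F] (a : ℕ → F) (n : ℕ) :
    ∑ p ∈ Finset.range (n + 2), ((n+1).choose p : F) * a p
      = ∑ j ∈ Finset.range (n + 1), (n.choose j : F) * (a j + a (j + 1)) := by
  have h1 : ∑ p ∈ Finset.range (n + 2), ((n+1).choose p : F) * a p
      = (∑ p ∈ Finset.range (n + 1), (((n.choose p : F) + (n.choose (p+1) : F)) * a (p+1)))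
        + (n.choose 0 : F) * a 0 := by
    rw [Finset.sum_range_succ']
    simp [Nat.choose_succ_succ]
  have h2 : (∑ p ∈ Finset.range (n + 1), ((n.choose (p+1) : F) * a (p+1))) + (n.choose 0 : F) * a 0
      = ∑ p ∈ Finset.range (n + 1), (n.choose p : F) * a p := by
    have h := (Finset.sum_range_succ' (fun p => (n.choose p : F) * a p) (n+1)).symm
    rw [h, Finset.sum_range_succ, Nat.choose_succ_self]
    push_cast
    ring
  have h4 : ∑ p ∈ Finset.range (n + 1), (((n.choose p : F) + (n.choose (p+1) : F)) * a (p+1))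
      = (∑ p ∈ Finset.range (n + 1), ((n.choose p : F) * a (p+1)))
        + ∑ p ∈ Finset.range (n + 1), ((n.choose (p+1) : F) * a (p+1)) := by
    rw [← Finset.sum_add_distrib]
    exact Finset.sum_congr rfl fun p _ => by ring
  have h5 : ∑ j ∈ Finset.range (n + 1), (n.choose j : F) * (a j + a (j + 1))
      = (∑ j ∈ Finset.range (n + 1), ((n.choose j : F) * a j))
        + ∑ j ∈ Finset.range (n + 1), ((n.choose j : F) * a (j+1)) := by
    rw [← Finset.sum_add_distrib]
    exact Finset.sum_congr rfl fun j _ => by ring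
  rw [h1, h4, h5]
  linear_combination h2

/-- recurrence in `n` for the new type degenerate Simsek numbers,
together with the initial condition `y*₁,α(n,0;λ) = δ_{n,0}`. -/
theorem ystar_recurrence_n (F : Type*) [Field F] [CharZero F] (α lam : F) :
    (∀ (n k : ℕ), 1 ≤ k →
      ystar α lam (n + 1) k =
        lam / (k : F) *
            ∑ j ∈ Finset.range (n + 1),
              (n.choose j : F) * (ystar α lam j (k - 1) + ystar α lam (j + 1) (k - 1)) +
          (1 + α - (k : F) * α) / (k : F) * ystar α lam (n + 1) (k - 1)) ∧
    (∀ n : ℕ, ystar α lam n 0 = if n = 0 then 1 else 0) := by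
  constructor
  · intro n k hk
    obtain ⟨m, rfl⟩ : ∃ m, k = m + 1 := ⟨k - 1, by omega⟩
    simp only [Nat.add_sub_cancel]
    have hm1 : ((m : F) + 1) ≠ 0 := by
      have h : ((m + 1 : ℕ) : F) ≠ 0 := Nat.cast_ne_zero.mpr (Nat.succ_ne_zero m)
      push_cast at h; exact h
    rw [ystar_succ α lam (n+1) m,
      binom_shift (fun p => ystar α lam p m) n]
    push_cast
    rw [div_eq_iff hm1]
    field_simp
    ring
  · intro n
    simp [ystar, stirling1, zero_pow_eq]
end

section
/- For all natural numbers k and any x in a commutative ring, the ordinary falling factorial satisfies (x)_k = Σ_{j=0}^{k} C(k,j) (j/k) x^j B_{k-j}^{(k)} for k ≥ 1, where B_m^{(k)} are the Bernoulli numbers of order k. -/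
open Finset

/-- Bernoulli numbers of order `k`, defined by the egf `(t/(eᵗ-1))ᵏ = Σ_m B_m^{(k)} tᵐ/m!`. -/
noncomputable def bernoulliHigh (k m : ℕ) : ℚ :=
  (m.factorial : ℚ) *
    PowerSeries.coeff m ((PowerSeries.mk fun n => bernoulli n / n.factorial) ^ k)

section Aux

open PowerSeries

/-- The Bernoulli exponential generating function. -/
noncomputable def Fber : PowerSeries ℚ := PowerSeries.mk fun n => bernoulli n / n.factorial

lemma Fber_eq : Fber = bernoulliPowerSeries ℚ := by
  ext n; simp [Fber, bernoulliPowerSeries]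

lemma FE : Fber * (exp ℚ - 1) = X := by
  rw [Fber_eq]; exact bernoulliPowerSeries_mul_exp_sub_one ℚ

lemma dexp : d⁄dX ℚ (exp ℚ) = exp ℚ := by
  ext n
  rw [coeff_derivative, coeff_exp, coeff_exp]
  simp only [eq_ratCast, Rat.cast_div]
  rw [Nat.factorial_succ]
  have h1 : ((n:ℚ)+1) ≠ 0 := by positivity
  have h2 : ((n.factorial :ℚ)) ≠ 0 := by exact_mod_cast n.factorial_ne_zero
  field_simp
  push_cast
  ring

lemma dF : X * (d⁄dX ℚ Fber) = Fber - Fber^2 * exp ℚ := by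
  have h := congrArg (d⁄dX ℚ) FE
  rw [Derivation.leibniz, derivative_X, map_sub, Derivation.map_one_eq_zero, dexp] at h
  simp only [smul_eq_mul, sub_zero] at h
  linear_combination Fber * h - (d⁄dX ℚ Fber) * FE

lemma dFk (m : ℕ) : ((m+1 : ℕ):PowerSeries ℚ) * Fber^(m+2)
    = ((m+1:ℕ):PowerSeries ℚ) * Fber^(m+1) - ((m+1:ℕ):PowerSeries ℚ) * (X * Fber^(m+1))
      - X * d⁄dX ℚ (Fber^(m+1)) := by
  have h2 : X * d⁄dX ℚ (Fber^(m+1)) = ((m+1:ℕ):PowerSeries ℚ) * (Fber^m * (X * d⁄dX ℚ Fber)) := by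
    rw [Derivation.leibniz_pow]
    simp only [Nat.add_sub_cancel, smul_eq_mul, nsmul_eq_mul]
    ring
  rw [dF] at h2
  linear_combination h2 - ((m+1:ℕ):PowerSeries ℚ) * Fber^(m+1) * FE

/-- The coefficients of powers of the Bernoulli egf. -/
noncomputable def bbq (n k : ℕ) : ℚ := PowerSeries.coeff n (Fber ^ k)

lemma bbq_zero (k : ℕ) : bbq 0 k = 1 := by
  rw [bbq, coeff_zero_eq_constantCoeff_apply, map_pow]
  simp [Fber, one_pow]

lemma bbq_rec (m n : ℕ) :
    ((m+1:ℕ):ℚ) * bbq (n+1) (m+2)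
      = ((m+1:ℕ):ℚ) * bbq (n+1) (m+1) - ((m+1:ℕ):ℚ) * bbq n (m+1)
        - ((n+1:ℕ):ℚ) * bbq (n+1) (m+1) := by
  have h := congrArg (PowerSeries.coeff (n+1)) (dFk m)
  have hc : ∀ f : PowerSeries ℚ, PowerSeries.coeff (n+1) (((m+1:ℕ):PowerSeries ℚ) * f)
      = ((m+1:ℕ):ℚ) * PowerSeries.coeff (n+1) f := by
    intro f
    rw [← map_natCast (PowerSeries.C (R := ℚ)) (m+1), coeff_C_mul]
  rw [map_sub, map_sub, hc, hc, hc, coeff_succ_X_mul, coeff_succ_X_mul, coeff_derivative] at h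
  simp only [bbq]
  push_cast at h ⊢
  linear_combination h

lemma stirling1_zero : ∀ m, stirling1 (m+1) 0 = 0
  | 0 => by simp [stirling1]
  | m+1 => by rw [stirling1, stirling1_zero m]; ring

lemma stirling1_gt : ∀ m l, m < l → stirling1 m l = 0
  | 0, l+1, _ => by rw [stirling1]
  | m+1, l+1, h => by
    rw [stirling1, stirling1_gt m l (by omega), stirling1_gt m (l+1) (by omega)]
    ring

lemma stirling1_diag : ∀ m, stirling1 m m = 1
  | 0 => rfl
  | m+1 => by
    rw [stirling1, stirling1_diag m, stirling1_gt m (m+1) (by omega)]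
    ring

lemma key : ∀ k : ℕ, ∀ j, j ≤ k →
    ((k.choose j : ℕ):ℚ) * (((k-j).factorial:ℕ):ℚ) * bbq (k-j) (k+1)
      = ((stirling1 (k+1) (j+1) : ℤ):ℚ) := by
  intro k
  induction k with
  | zero =>
    intro j hj
    interval_cases j
    simp [bbq_zero, stirling1, stirling1_diag]
  | succ k IH =>
    intro j hj
    rcases Nat.lt_or_ge j (k+1) with hjk | hjk
    · have hjk' : j ≤ k := by omega
      obtain ⟨n, hn⟩ := Nat.exists_eq_add_of_le hjk'  -- k = j + n
      subst hn
      rcases j with _ | i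
      · -- j = 0 case
        simp only [Nat.zero_add] at *
        have hrec := bbq_rec n n
        have h1 := IH 0 (Nat.zero_le _)
        simp only [Nat.choose_zero_right, Nat.sub_zero, Nat.cast_one, one_mul] at h1 ⊢
        have hst : stirling1 (n+1+1) (0+1)
            = stirling1 (n+1) 0 - ((n+1:ℕ):ℤ) * stirling1 (n+1) (0+1) := rfl
        rw [hst, stirling1_zero]
        have hf : (((n+1).factorial:ℕ):ℚ) = ((n+1:ℕ):ℚ) * ((n.factorial:ℕ):ℚ) := by
          rw [Nat.factorial_succ]; push_cast; ring
        apply mul_left_cancel₀ (show ((n:ℚ)+1) ≠ 0 by positivity)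
        push_cast at hrec h1 hf ⊢
        linear_combination ((n+1).factorial:ℚ) * hrec
          - (((n:ℚ)+1) * bbq n (n+1)) * hf - (((n:ℚ)+1)^2) * h1
      · -- j = i+1 ≤ k
        have h1 := IH i (by omega)
        have h2 := IH (i+1) (by omega)
        have e1n : (i+1+n+1) * ((i+1+n).choose i) = ((i+1+n+1).choose (i+1)) * (i+1) :=
          Nat.add_one_mul_choose_eq (i+1+n) i
        have e2n : ((i+1+n+1).choose (i+1)) * (n+1) = (i+1+n+1) * ((i+1+n).choose (i+1)) := by
          have h3 := Nat.choose_succ_right_eq (i+1+n+1) (i+1)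
          have h4 := Nat.add_one_mul_choose_eq (i+1+n) (i+1)
          have h5 : i+1+n + 1 - (i+1) = n + 1 := by omega
          rw [h5] at h3
          rw [← h3]
          simpa using h4.symm
        have hst : stirling1 (i+1+n+1+1) (i+1+1)
            = stirling1 (i+1+n+1) (i+1) - ((i+1+n+1:ℕ):ℤ) * stirling1 (i+1+n+1) (i+1+1) := rfl
        have hs1 : i+1+n - i = n + 1 := by omega
        have hs2 : i+1+n - (i+1) = n := by omega
        have hs3 : i+1+n + 1 - (i+1) = n + 1 := by omega
        rw [hs1] at h1
        rw [hs2] at h2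
        rw [hs3, hst]
        have hrec := bbq_rec (i+1+n) n
        have hf : (((n+1).factorial:ℕ):ℚ) = ((n+1:ℕ):ℚ) * ((n.factorial:ℕ):ℚ) := by
          rw [Nat.factorial_succ]; push_cast; ring
        apply mul_left_cancel₀ (show ((i:ℚ)+1+(n:ℚ)+1) ≠ 0 by positivity)
        have e1q : ((i:ℚ)+1+n+1) * ((i+1+n).choose i : ℚ)
            = ((i+1+n+1).choose (i+1) : ℚ) * ((i:ℚ)+1) := by exact_mod_cast e1n
        have e2q : ((i+1+n+1).choose (i+1) : ℚ) * ((n:ℚ)+1)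
            = ((i:ℚ)+1+n+1) * ((i+1+n).choose (i+1) : ℚ) := by exact_mod_cast e2n
        push_cast at hrec h1 h2 hf ⊢
        linear_combination (((i+1+n+1).choose (i+1) : ℚ) * ((n+1).factorial:ℚ)) * hrec
          + ((i:ℚ)+1+n+1) * h1
          - (((n+1).factorial:ℚ) * bbq (n+1) (i+1+n+1)) * e1q
          - (((i+1+n+1).choose (i+1) : ℚ) * ((i:ℚ)+1+n+1) * bbq n (i+1+n+1)) * hf
          - (((i:ℚ)+1+n+1) * (n.factorial:ℚ) * bbq n (i+1+n+1)) * e2q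
          - (((i:ℚ)+1+n+1)^2) * h2
    · have hj' : j = k+1 := by omega
      subst hj'
      simp only [Nat.choose_self, Nat.sub_self, Nat.factorial_zero, Nat.cast_one, one_mul,
        bbq_zero, stirling1_diag]
      norm_num

lemma fall_stirling {R : Type*} [CommRing R] (x : R) :
    ∀ k, fall x k = ∑ j ∈ range (k+1), ((stirling1 k j : ℤ):R) * x^j := by
  intro k
  induction k with
  | zero => simp [fall, stirling1]
  | succ k IH =>
    have hf : fall x (k+1) = fall x k * (x - (k:R)) := by
      rw [fall, fall, prod_range_succ]
    rw [hf, IH]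
    rw [Finset.sum_range_succ' _ (k+1)]
    have hrw : ∀ i, ((stirling1 (k+1) (i+1) : ℤ):R) * x^(i+1)
        = ((stirling1 k i : ℤ):R) * x^(i+1) - (k:R) * (((stirling1 k (i+1) : ℤ):R) * x^(i+1)) := by
      intro i
      have : stirling1 (k+1) (i+1) = stirling1 k i - (k:ℤ) * stirling1 k (i+1) := rfl
      rw [this]
      push_cast
      ring
    have h0 : ((stirling1 (k+1) 0 : ℤ):R) * x^0 = -(k:R) * (((stirling1 k 0 : ℤ):R) * x^0) := by
      have : stirling1 (k+1) 0 = -(k:ℤ) * stirling1 k 0 := rfl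
      rw [this]
      push_cast
      ring
    rw [h0]
    simp only [hrw]
    rw [Finset.sum_sub_distrib, ← Finset.mul_sum]
    have hsum2 : ∑ i ∈ range (k+1), ((stirling1 k (i+1) : ℤ):R) * x^(i+1)
        = (∑ j ∈ range (k+1), ((stirling1 k j : ℤ):R) * x^j) - ((stirling1 k 0 : ℤ):R) * x^0 := by
      have := Finset.sum_range_succ' (fun j => ((stirling1 k j : ℤ):R) * x^j) (k+1)
      have hlast : ∑ j ∈ range (k+2), ((stirling1 k j : ℤ):R) * x^j
          = ∑ j ∈ range (k+1), ((stirling1 k j : ℤ):R) * x^j := by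
        rw [Finset.sum_range_succ, stirling1_gt k (k+1) (by omega)]
        simp
      rw [hlast] at this
      linear_combination -this
    have hsum1 : ∑ i ∈ range (k+1), ((stirling1 k i : ℤ):R) * x^(i+1)
        = (∑ j ∈ range (k+1), ((stirling1 k j : ℤ):R) * x^j) * x := by
      rw [Finset.sum_mul]
      apply Finset.sum_congr rfl
      intro i _
      rw [pow_succ]
      ring
    linear_combination (k:R) * hsum2 - hsum1

lemma bernoulliHigh_eq (k m : ℕ) : bernoulliHigh k m = ((m.factorial:ℕ):ℚ) * bbq m k := rfl

end Aux

/-- `(x)_k = Σ_{j=0}^{k} C(k,j) (j/k) xʲ B_{k-j}^{(k)}` for `k ≥ 1`. -/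
theorem fall_eq_sum_bernoulliHigh (R : Type*) [CommRing R] [Algebra ℚ R]
    (x : R) (k : ℕ) (hk : 1 ≤ k) :
    fall x k =
      ∑ j ∈ Finset.range (k + 1),
        algebraMap ℚ R ((k.choose j : ℚ) * ((j : ℚ) / (k : ℚ)) * bernoulliHigh k (k - j)) *
          x ^ j := by
  rw [fall_stirling x k]
  apply Finset.sum_congr rfl
  intro j hj
  rw [Finset.mem_range] at hj
  congr 1
  have hq : ((k.choose j : ℚ)) * ((j:ℚ)/(k:ℚ)) * bernoulliHigh k (k-j)
      = ((stirling1 k j : ℤ):ℚ) := by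
    obtain ⟨m, rfl⟩ : ∃ m, k = m + 1 := ⟨k - 1, by omega⟩
    rcases j with _ | i
    · rw [stirling1_zero]
      norm_num
    · have hi : i ≤ m := by omega
      have hkey := key m i hi
      have hsub : m + 1 - (i+1) = m - i := by omega
      rw [hsub, bernoulliHigh_eq]
      have hcq : ((m+1).choose (i+1) : ℚ) * ((i:ℚ)+1) = ((m:ℚ)+1) * (m.choose i:ℚ) := by
        exact_mod_cast (Nat.add_one_mul_choose_eq m i).symm
      have hm0 : ((m:ℚ)+1) ≠ 0 := by positivity
      push_cast at hkey hcq ⊢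
      field_simp
      linear_combination (((m-i).factorial:ℚ) * bbq (m-i) (m+1)) * hcq
        + ((m:ℚ)+1) * hkey
  rw [hq, map_intCast]
end

section
/- As formal power series identity: for every n ≥ 0, the generating function φ*_n(x) := Σ_{k≥0} y*_{1,α}(n,k;λ) x^k (a formal power series in x over ℚ(α,λ) for α ≠ 0) satisfies φ*_n(x) = Σ_{k≥0} ((log(1+αx))/α)^k · y_1(n,k;λ), i.e. φ*_n is obtained from the generating function of Simsek numbers by substituting log(1+αx)/α for x. -/
open Finset

lemma stirling1_pos_zero : ∀ n : ℕ, stirling1 (n + 1) 0 = 0 := by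
  intro n
  induction n with
  | zero => simp [stirling1]
  | succ m ih => rw [stirling1]; rw [ih]; ring

open PowerSeries in
/-- The formal series `log(1+αx)/α`. -/
noncomputable def Lser (F : Type*) [Field F] (α : F) : F⟦X⟧ :=
  PowerSeries.mk fun m => if m = 0 then (0 : F) else (-1) ^ (m - 1) * α ^ (m - 1) / (m : F)

open PowerSeries in
lemma coeff_derivativeFun' {R : Type*} [CommRing R] (f : R⟦X⟧) (n : ℕ) :
    coeff n (derivativeFun f) = coeff (n + 1) f * (n + 1) :=
  coeff_derivative f n

open PowerSeries in
lemma coeff_X_mul_derivativeFun {F : Type*} [Field F] (P : F⟦X⟧) (j : ℕ) :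
    coeff j (X * derivativeFun P) = (j : F) * coeff j P := by
  cases j with
  | zero => simp
  | succ j => rw [coeff_succ_X_mul, coeff_derivativeFun']; push_cast; ring

open PowerSeries in
lemma one_add_mul_deriv_L {F : Type*} [Field F] [CharZero F] (α : F) :
    (1 + PowerSeries.C α * X) * derivativeFun (Lser F α) = 1 := by
  ext m
  rw [add_mul, one_mul, map_add, mul_assoc, coeff_C_mul, coeff_X_mul_derivativeFun,
    coeff_derivativeFun']
  have hc : ∀ i : ℕ, coeff (i + 1) (Lser F α) = (-1) ^ i * α ^ i / ((i : F) + 1) := by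
    intro i
    simp only [Lser, coeff_mk, if_neg (Nat.succ_ne_zero i), Nat.add_sub_cancel]
    push_cast
    ring
  cases m with
  | zero =>
    simp [hc 0]
  | succ m =>
    rw [hc (m + 1), hc m]
    have hm1 : ((m : F) + 1) ≠ 0 := Nat.cast_add_one_ne_zero m
    have hm2 : ((m : F) + 1 + 1) ≠ 0 := by
      have := Nat.cast_add_one_ne_zero (m + 1) (R := F); push_cast at this; exact this
    rw [coeff_one, if_neg (Nat.succ_ne_zero m)]
    push_cast
    field_simp
    ring

open PowerSeries in
lemma deriv_L_pow {F : Type*} [Field F] (α : F) :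
    ∀ k : ℕ, derivativeFun ((Lser F α) ^ (k + 1)) =
      PowerSeries.C ((k : F) + 1) * (Lser F α) ^ k * derivativeFun (Lser F α) := by
  intro k
  induction k with
  | zero => simp
  | succ k ih =>
    rw [pow_succ, derivativeFun_mul, ih]
    rw [smul_eq_mul, smul_eq_mul]
    push_cast [map_add, map_one]
    ring

open PowerSeries in
/-- Key lemma (denominator-free form): `j! · [xʲ](log(1+αx)/α)ᵏ = α^(j-k) k! s(j,k)`. -/
lemma coeff_L_pow {F : Type*} [Field F] [CharZero F] (α : F) (hα : α ≠ 0) :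
    ∀ j k : ℕ, coeff j ((Lser F α) ^ k) * (j.factorial : F) =
      α ^ ((j : ℤ) - k) * (k.factorial : F) * ((stirling1 j k : ℤ) : F) := by
  intro j
  induction j with
  | zero =>
    intro k
    rw [coeff_zero_eq_constantCoeff, map_pow]
    have h0 : constantCoeff (Lser F α) = 0 := by
      rw [← coeff_zero_eq_constantCoeff]; simp [Lser]
    rw [h0]
    cases k with
    | zero => simp [stirling1]
    | succ k => simp [stirling1, zero_pow (Nat.succ_ne_zero k)]
  | succ j ih =>
    intro k
    cases k with
    | zero =>
      simp [stirling1_pos_zero j]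
    | succ k =>
      -- derive the recurrence relation from the series identity
      have hs : (1 + PowerSeries.C α * X) * derivativeFun ((Lser F α) ^ (k + 1)) =
          PowerSeries.C ((k : F) + 1) * (Lser F α) ^ k := by
        rw [deriv_L_pow]
        calc (1 + PowerSeries.C α * X) *
              (PowerSeries.C ((k : F) + 1) * (Lser F α) ^ k * derivativeFun (Lser F α))
            = PowerSeries.C ((k : F) + 1) * (Lser F α) ^ k *
              ((1 + PowerSeries.C α * X) * derivativeFun (Lser F α)) := by ring
          _ = PowerSeries.C ((k : F) + 1) * (Lser F α) ^ k := by
              rw [one_add_mul_deriv_L]; ring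
      have hrel := congrArg (coeff j) hs
      rw [add_mul, one_mul, map_add, mul_assoc, coeff_C_mul, coeff_X_mul_derivativeFun,
        coeff_derivativeFun', coeff_C_mul] at hrel
      have ihk := ih k
      have ihk1 := ih (k + 1)
      have e2' : α ^ ((j : ℤ) - (k : ℤ)) = α ^ ((j : ℤ) - ((k : ℤ) + 1)) * α := by
        rw [← zpow_add_one₀ hα]
        congr 1
        ring
      have hst : ((stirling1 (j + 1) (k + 1) : ℤ) : F) =
          ((stirling1 j k : ℤ) : F) - (j : F) * ((stirling1 j (k + 1) : ℤ) : F) := by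
        rw [stirling1]; push_cast; ring
      have ecast : ((j : ℤ) + 1) - ((k : ℤ) + 1) = (j : ℤ) - ((k : ℤ) + 1) + 1 := by ring
      rw [Nat.factorial_succ]
      push_cast [Nat.factorial_succ, ecast] at ihk ihk1 hst ⊢
      rw [e2'] at ihk
      rw [zpow_add_one₀ hα]
      set u := α ^ ((j : ℤ) - ((k : ℤ) + 1)) with hu
      linear_combination (j.factorial : F) * hrel + ((k : F) + 1) * ihk
        - α * (j : F) * ihk1 - u * α * (((k : F) + 1) * (k.factorial : F)) * hst

open PowerSeries in
/-- the generating function `φ*ₙ(x) = Σ_k y*₁,α(n,k;λ) xᵏ` is obtained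
from the generating function of the Simsek numbers by substituting `log(1+αx)/α` for
`x`; coefficientwise, the coefficient of `xʲ` in `φ*ₙ` equals
`Σ_{k=0}^{j} y₁(n,k;λ) · (coefficient of xʲ in (log(1+αx)/α)ᵏ)`. -/
theorem phiStar_eq_subst_log (F : Type*) [Field F] [CharZero F]
    (α lam : F) (hα : α ≠ 0) (n : ℕ) :
    ∀ j : ℕ,
      coeff j (PowerSeries.mk fun k => ystar α lam n k) =
        ∑ k ∈ Finset.range (j + 1),
          simsek lam n k *
            coeff j
              ((PowerSeries.mk fun m =>
                  if m = 0 then (0 : F) else (-1) ^ (m - 1) * α ^ (m - 1) / (m : F)) ^ k) := by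
  intro j
  have hL : (PowerSeries.mk fun m =>
      if m = 0 then (0 : F) else (-1) ^ (m - 1) * α ^ (m - 1) / (m : F)) = Lser F α := rfl
  have hjf : ((j.factorial : F)) ≠ 0 := Nat.cast_ne_zero.mpr j.factorial_ne_zero
  rw [hL, coeff_mk, ystar, Finset.mul_sum]
  refine Finset.sum_congr rfl fun ℓ hℓ => ?_
  have hℓj : ℓ ≤ j := Nat.lt_succ_iff.mp (Finset.mem_range.mp hℓ)
  have hcf : coeff j ((Lser F α) ^ ℓ) =
      α ^ (j - ℓ) * (ℓ.factorial : F) * ((stirling1 j ℓ : ℤ) : F) / (j.factorial : F) := by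
    have key := coeff_L_pow α hα j ℓ
    rw [show (j : ℤ) - ℓ = ((j - ℓ : ℕ) : ℤ) by omega, zpow_natCast] at key
    rw [eq_div_iff hjf]
    exact key
  rw [hcf, simsek]
  have hS : (∑ i ∈ Finset.range (ℓ + 1),
        (ℓ.choose i : F) * α ^ (j - ℓ) * ((stirling1 j ℓ : ℤ) : F) * lam ^ i * (i : F) ^ n)
      = (α ^ (j - ℓ) * ((stirling1 j ℓ : ℤ) : F)) *
        ∑ i ∈ Finset.range (ℓ + 1), (ℓ.choose i : F) * (i : F) ^ n * lam ^ i := by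
    rw [Finset.mul_sum]
    exact Finset.sum_congr rfl fun i _ => by ring
  rw [hS]
  have hlf : ((ℓ.factorial : F)) ≠ 0 := Nat.cast_ne_zero.mpr ℓ.factorial_ne_zero
  field_simp
end
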